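/- (Key structural lemma for informativity.) Assume R ≻ 0 and the pair (Q^{1/2}, A) is observable. Let K = (A_K ∈ ℝ^{n×n}, B_K ∈ ℝ^{n×p}, C_K ∈ ℝ^{m×n}) be a full-order strictly proper policy with A_cl(K) stable. Suppose B̃ ∈ ℝ^{2n×k} satisfies C_cl(K)·exp(A_cl(K)·τ)·B̃ = 0 for all τ ≥ 0, and let X̃ ∈ ℝ^{2n×2n} be the solution of the Lyapunov equation A_cl(K)·X̃ + X̃·A_cl(K)ᵀ + B̃·B̃ᵀ = 0. Then X̃ has the block form [[0, 0],[0, X̃_{22}]] with n×n blocks, i.e. its top-left n×n block and its top-right n×n block are both zero. -/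

import Mathlib

open Matrix MeasureTheory Filter Topology

noncomputable section

/-- A real square matrix is (Hurwitz) stable if every eigenvalue of it, viewed as a
complex matrix, has strictly negative real part. -/
def IsStableMatrix {ι : Type*} [Fintype ι] [DecidableEq ι] (M : Matrix ι ι ℝ) : Prop :=
  ∀ μ ∈ spectrum ℂ (M.map fun x => (x : ℂ)), μ.re < 0

/-- The pair `(A, B)` is controllable if the controllability matrix
`[B, AB, …, A^{card−1}B]` has full row rank. -/
def Controllable {ι μ : Type*} [Fintype ι] [DecidableEq ι] [Fintype μ]
    (A : Matrix ι ι ℝ) (B : Matrix ι μ ℝ) : Prop :=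
  (Matrix.of fun (i : ι) (kj : Fin (Fintype.card ι) × μ) => (A ^ (kj.1 : ℕ) * B) i kj.2).rank
    = Fintype.card ι

/-- Closed-loop `A` matrix of a full-order strictly proper policy `(A_K, B_K, C_K)`. -/
def AclM {n m p : ℕ} (A : Matrix (Fin n) (Fin n) ℝ) (B : Matrix (Fin n) (Fin m) ℝ)
    (C : Matrix (Fin p) (Fin n) ℝ) (AK : Matrix (Fin n) (Fin n) ℝ)
    (BK : Matrix (Fin n) (Fin p) ℝ) (CK : Matrix (Fin m) (Fin n) ℝ) :
    Matrix (Fin n ⊕ Fin n) (Fin n ⊕ Fin n) ℝ :=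
  fromBlocks A (B * CK) (BK * C) AK

/-- The positive semidefinite square root of a positive semidefinite matrix (the definition
`Matrix.PosSemidef.sqrt` of the older Mathlib, which has since been removed). -/
def Matrix.PosSemidef.sqrt {ι : Type*} [Fintype ι] [DecidableEq ι]
    {M : Matrix ι ι ℝ} (hM : M.PosSemidef) : Matrix ι ι ℝ :=
  hM.1.eigenvectorUnitary.1 * diagonal ((↑) ∘ Real.sqrt ∘ hM.1.eigenvalues) *
    (star hM.1.eigenvectorUnitary : Matrix ι ι ℝ)

/-- Closed-loop `B` matrix of a full-order strictly proper policy. -/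
def BclM {n p : ℕ} {W : Matrix (Fin n) (Fin n) ℝ} {V : Matrix (Fin p) (Fin p) ℝ}
    (hW : W.PosSemidef) (hV : V.PosDef) (BK : Matrix (Fin n) (Fin p) ℝ) :
    Matrix (Fin n ⊕ Fin n) (Fin n ⊕ Fin p) ℝ :=
  fromBlocks hW.sqrt 0 0 (BK * hV.posSemidef.sqrt)

/-- Closed-loop `C` matrix of a full-order strictly proper policy. -/
def CclM {n m : ℕ} {Q : Matrix (Fin n) (Fin n) ℝ} {R : Matrix (Fin m) (Fin m) ℝ}
    (hQ : Q.PosSemidef) (hR : R.PosDef) (CK : Matrix (Fin m) (Fin n) ℝ) :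
    Matrix (Fin n ⊕ Fin m) (Fin n ⊕ Fin n) ℝ :=
  fromBlocks hQ.sqrt 0 0 (hR.posSemidef.sqrt * CK)

/-- `K` is non-degenerate for LQG (relative to closed-loop data and cost level `γ`):
there are a positive definite `P` with invertible top-right `n×n` block and a symmetric
`Γ` certifying the nonstrict LMIs with `γ = J(K)`. -/
def NonDegenerateLQG {n m p : ℕ} (Acl : Matrix (Fin n ⊕ Fin n) (Fin n ⊕ Fin n) ℝ)
    (Bcl : Matrix (Fin n ⊕ Fin n) (Fin n ⊕ Fin p) ℝ)
    (Ccl : Matrix (Fin n ⊕ Fin m) (Fin n ⊕ Fin n) ℝ) (γ : ℝ) : Prop :=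
  ∃ (P : Matrix (Fin n ⊕ Fin n) (Fin n ⊕ Fin n) ℝ)
    (Γ : Matrix (Fin n ⊕ Fin m) (Fin n ⊕ Fin m) ℝ),
    P.PosDef ∧ IsUnit P.toBlocks₁₂ ∧ Γ.IsSymm ∧
    (-(fromBlocks (Aclᵀ * P + P * Acl) (P * Bcl) (Bclᵀ * P)
        (-(γ • (1 : Matrix (Fin n ⊕ Fin p) (Fin n ⊕ Fin p) ℝ))))).PosSemidef ∧
    (fromBlocks P Cclᵀ Ccl Γ).PosSemidef ∧
    Γ.trace ≤ γ

/-!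
Differentiating `C_cl exp(A_cl τ) B̃ = 0` at `τ = 0` gives `C_cl A_clʲ B̃ = 0` for all `j`:
the columns of `B̃ B̃ᵀ` lie in the unobservable subspace of `(C_cl, A_cl)`. The Lyapunov
operator `X ↦ A_cl X + X A_clᵀ` is injective because `A_cl` and `-A_clᵀ` have disjoint spectra
(Sylvester), and it preserves the matrices with columns in that subspace, so it is bijective
there and the preimage `X̃` of `-B̃ B̃ᵀ` has its columns in the subspace too.
Since `R^{1/2}` is invertible, `C_cl A_clʲ X̃ = 0` forces `C_K` to annihilate the lower block row
of each `A_clʲ X̃`, so the upper block row evolves under `A` alone and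
`Q^{1/2} Aʲ [X̃₁₁ X̃₁₂] = 0` for all `j`; observability of `(Q^{1/2}, A)` makes it vanish.
-/

open Polynomial in
theorem Matrix.aeval_mul_eq_mul_aeval {R ι κ : Type*} [CommRing R] [Fintype ι] [DecidableEq ι]
    [Fintype κ] [DecidableEq κ] {A : Matrix ι ι R} {B : Matrix κ κ R} {X : Matrix ι κ R}
    (h : A * X = X * B) (q : R[X]) : aeval A q * X = X * aeval B q := by
  have hpow (j : ℕ) : A ^ j * X = X * B ^ j := by
    induction j with
    | zero => simp
    | succ j ih =>
      rw [pow_succ', Matrix.mul_assoc, ih, ← Matrix.mul_assoc, h, Matrix.mul_assoc, ← pow_succ']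
  induction q using Polynomial.induction_on' with
  | add p q hp hq => rw [map_add, map_add, Matrix.add_mul, Matrix.mul_add, hp, hq]
  | monomial j c =>
    rw [aeval_monomial, aeval_monomial, ← Algebra.smul_def, ← Algebra.smul_def, Matrix.smul_mul,
      hpow, Matrix.mul_smul]

open Polynomial in
theorem Matrix.eq_zero_of_mul_eq_mul_of_disjoint_spectrum {K ι κ : Type*} [Field K]
    [IsAlgClosed K] [Fintype ι] [DecidableEq ι] [Fintype κ] [DecidableEq κ]
    {A : Matrix ι ι K} {B : Matrix κ κ K} {X : Matrix ι κ K}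
    (hAB : Disjoint (spectrum K A) (spectrum K B)) (h : A * X = X * B) : X = 0 := by
  obtain ⟨u, v, huv⟩ : IsCoprime A.charpoly B.charpoly := by
    refine (isCoprime_iff_aeval_ne_zero_of_isAlgClosed K K _ _).2 fun a => ?_
    rw [← not_and_or]
    rintro ⟨hA, hB⟩
    exact hAB.ne_of_mem (mem_spectrum_iff_isRoot_charpoly.2 hA)
      (mem_spectrum_iff_isRoot_charpoly.2 hB) rfl
  -- Evaluating `u χ_A + v χ_B = 1` at `A` kills `u(A) χ_A(A)`, and `χ_B(A) X = X χ_B(B) = 0`.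
  calc X = aeval A (u * A.charpoly + v * B.charpoly) * X := by rw [huv, map_one, Matrix.one_mul]
    _ = 0 := by
      rw [map_add, map_mul, map_mul, aeval_self_charpoly, Matrix.add_mul, Matrix.mul_assoc,
        Matrix.mul_assoc, aeval_mul_eq_mul_aeval h, aeval_self_charpoly]
      simp

theorem Matrix.spectrum_transpose {K ι : Type*} [Field K] [Fintype ι] [DecidableEq ι]
    (A : Matrix ι ι K) : spectrum K Aᵀ = spectrum K A := by
  ext μ
  rw [mem_spectrum_iff_isRoot_charpoly, mem_spectrum_iff_isRoot_charpoly, charpoly_transpose]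

theorem IsStableMatrix.eq_zero_of_lyapunov {ι : Type*} [Fintype ι] [DecidableEq ι]
    {M X : Matrix ι ι ℝ} (hM : IsStableMatrix M) (h : M * X + X * Mᵀ = 0) : X = 0 := by
  set Mc := M.map ((↑) : ℝ → ℂ)
  have hdisj : Disjoint (spectrum ℂ Mc) (spectrum ℂ (-Mcᵀ)) := by
    refine Set.disjoint_left.2 fun μ hμ hμ' => ?_
    rw [← spectrum.neg_eq, Set.mem_neg, spectrum_transpose] at hμ'
    have hre := hM _ hμ
    have hre' := hM _ hμ'
    rw [Complex.neg_re] at hre'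
    linarith
  have hc : Mc * X.map (↑) = X.map (↑) * -Mcᵀ := by
    have hmap := congrArg Complex.ofRealHom.mapMatrix h
    rw [map_add, map_mul, map_mul, map_zero, RingHom.mapMatrix_apply, RingHom.mapMatrix_apply,
      RingHom.mapMatrix_apply, transpose_map] at hmap
    rw [Matrix.mul_neg, eq_neg_iff_add_eq_zero]
    exact hmap
  exact Matrix.map_injective Complex.ofReal_injective
    (eq_zero_of_mul_eq_mul_of_disjoint_spectrum hdisj hc)

theorem LinearMap.mem_of_apply_mem_of_injective {K V : Type*} [DivisionRing K] [AddCommGroup V]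
    [Module K V] [FiniteDimensional K V] {f : V →ₗ[K] V} (hf : Function.Injective f)
    {p : Submodule K V} (hp : ∀ x ∈ p, f x ∈ p) {x : V} (hx : f x ∈ p) : x ∈ p := by
  have hsurj : Function.Surjective (f.restrict hp) := LinearMap.injective_iff_surjective.mp
    fun y z hyz => Subtype.ext (hf (congrArg Subtype.val hyz))
  obtain ⟨y, hy⟩ := hsurj ⟨f x, hx⟩
  exact hf (congrArg Subtype.val hy) ▸ y.2

def Matrix.unobservableSubmodule {R ι ρ : Type*} [CommRing R] [Fintype ι] [DecidableEq ι]
    (C : Matrix ρ ι R) (A : Matrix ι ι R) (κ : Type*) : Submodule R (Matrix ι κ R) where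
  carrier := {X | ∀ j : ℕ, C * A ^ j * X = 0}
  add_mem' hX hY j := by rw [Matrix.mul_add, hX j, hY j, add_zero]
  zero_mem' _ := Matrix.mul_zero _
  smul_mem' c X hX j := by rw [Matrix.mul_smul, hX j, smul_zero]

theorem Matrix.mul_add_mul_transpose_mem_unobservableSubmodule {R ι ρ : Type*} [CommRing R]
    [Fintype ι] [DecidableEq ι] {C : Matrix ρ ι R} {A X : Matrix ι ι R}
    (hX : X ∈ unobservableSubmodule C A ι) : A * X + X * Aᵀ ∈ unobservableSubmodule C A ι := by
  intro j
  rw [Matrix.mul_add, ← Matrix.mul_assoc, Matrix.mul_assoc C, ← pow_succ, ← Matrix.mul_assoc,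
    hX (j + 1), hX j, Matrix.zero_mul, add_zero]

theorem IsStableMatrix.mul_pow_mul_eq_zero_of_lyapunov {ι ρ κ : Type*} [Fintype ι]
    [DecidableEq ι] [Fintype κ] {A X : Matrix ι ι ℝ} {C : Matrix ρ ι ℝ} {B : Matrix ι κ ℝ}
    (hA : IsStableMatrix A) (hB : ∀ j : ℕ, C * A ^ j * B = 0)
    (hX : A * X + X * Aᵀ + B * Bᵀ = 0) (j : ℕ) : C * A ^ j * X = 0 := by
  let L : Matrix ι ι ℝ →ₗ[ℝ] Matrix ι ι ℝ := LinearMap.mulLeft ℝ A + LinearMap.mulRight ℝ Aᵀ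
  have hL : Function.Injective L :=
    (injective_iff_map_eq_zero L).2 fun _ hY => hA.eq_zero_of_lyapunov hY
  have hLX : L X = -(B * Bᵀ) := eq_neg_of_add_eq_zero_left hX
  refine L.mem_of_apply_mem_of_injective hL
    (fun _ => mul_add_mul_transpose_mem_unobservableSubmodule) (hLX ▸ neg_mem fun i => ?_) j
  rw [← Matrix.mul_assoc, hB i, Matrix.zero_mul]

theorem UniqueDiffOn.eqOn_zero_of_hasDerivWithinAt {E : Type*} [NormedAddCommGroup E]
    [NormedSpace ℝ E] {f f' : ℝ → E} {s : Set ℝ} (hs : UniqueDiffOn ℝ s)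
    (hf : ∀ t ∈ s, HasDerivWithinAt f (f' t) s t) (h : Set.EqOn f 0 s) : Set.EqOn f' 0 s :=
  fun t ht => (hs t ht).eq_deriv s (hf t ht) ((hasDerivWithinAt_const t s 0).congr h (h ht))

theorem ContinuousLinearMap.map_pow_eq_zero_of_map_exp_smul_eq_zero {𝔸 E : Type*}
    [NormedRing 𝔸] [NormedAlgebra ℝ 𝔸] [CompleteSpace 𝔸] [NormedAddCommGroup E]
    [NormedSpace ℝ E] (L : 𝔸 →L[ℝ] E) (a : 𝔸)
    (h : ∀ τ : ℝ, 0 ≤ τ → L (NormedSpace.exp (τ • a)) = 0) (j : ℕ) : L (a ^ j) = 0 := by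
  suffices Set.EqOn (fun τ : ℝ => L (a ^ j * NormedSpace.exp (τ • a))) 0 (Set.Ici 0) by
    simpa using this Set.self_mem_Ici
  induction j with
  | zero => exact fun τ hτ => by simpa using h τ hτ
  | succ j ih =>
    refine (uniqueDiffOn_Ici 0).eqOn_zero_of_hasDerivWithinAt (fun t _ => ?_) ih
    have hderiv := (L.comp (ContinuousLinearMap.mul ℝ 𝔸 (a ^ j))).hasFDerivAt.comp_hasDerivAt t
      (hasDerivAt_exp_smul_const' (𝕂 := ℝ) a t)
    show HasDerivWithinAt _ (L (a ^ (j + 1) * NormedSpace.exp (t • a))) _ _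
    rw [pow_succ, mul_assoc]
    exact hderiv.hasDerivWithinAt

open scoped Matrix.Norms.Operator in
theorem Matrix.mul_pow_mul_eq_zero_of_mul_exp_smul_mul_eq_zero {ι ρ κ : Type*} [Fintype ι]
    [DecidableEq ι] [Fintype ρ] [Fintype κ] (C : Matrix ρ ι ℝ) (A : Matrix ι ι ℝ)
    (B : Matrix ι κ ℝ) (h : ∀ τ : ℝ, 0 ≤ τ → C * NormedSpace.exp (τ • A) * B = 0) (j : ℕ) :
    C * A ^ j * B = 0 :=
  ((mulRightLinearMap ρ ℝ B).comp (mulLeftLinearMap ι ℝ C)).toContinuousLinearMap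
    |>.map_pow_eq_zero_of_map_exp_smul_eq_zero A h j

theorem Matrix.eq_zero_of_rank_eq_zero {K m n : Type*} [Field K] [Fintype n] [DecidableEq n]
    {Z : Matrix m n K} (h : Z.rank = 0) : Z = 0 := by
  rw [Matrix.rank, Submodule.finrank_eq_zero, LinearMap.range_eq_bot] at h
  exact Matrix.toLin'.injective (by rw [map_zero, Matrix.toLin'_apply', h])

theorem Controllable.eq_zero_of_forall_mul_pow_mul_eq_zero {ι ρ κ : Type*} [Fintype ι]
    [DecidableEq ι] [Fintype ρ] [Fintype κ] {A : Matrix ι ι ℝ} {S : Matrix ρ ι ℝ}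
    (hc : Controllable Aᵀ Sᵀ) {Z : Matrix ι κ ℝ} (hZ : ∀ j : ℕ, S * A ^ j * Z = 0) : Z = 0 := by
  have hmul : Zᵀ * Matrix.of (fun i (kl : Fin (Fintype.card ι) × ρ) =>
      (Aᵀ ^ (kl.1 : ℕ) * Sᵀ) i kl.2) = 0 := by
    ext c ⟨k, l⟩
    simp_rw [← transpose_pow, ← transpose_mul]
    simpa [Matrix.mul_apply, mul_comm] using congrFun (congrFun (hZ k) l) c
  have hrank := rank_add_rank_le_card_of_mul_eq_zero hmul
  rw [Controllable] at hc
  simpa using Matrix.eq_zero_of_rank_eq_zero (by omega : Zᵀ.rank = 0)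

theorem Matrix.PosSemidef.sqrt_mul_sqrt {ι : Type*} [Fintype ι] [DecidableEq ι]
    {M : Matrix ι ι ℝ} (hM : M.PosSemidef) : hM.sqrt * hM.sqrt = M := by
  conv_rhs => rw [hM.1.spectral_theorem, Unitary.conjStarAlgAut_apply]
  have hu := Unitary.coe_star_mul_self hM.1.eigenvectorUnitary
  simp only [sqrt, Matrix.mul_assoc]
  rw [← Matrix.mul_assoc (star _ : Matrix _ _ ℝ) _ _, hu, Matrix.one_mul,
    ← Matrix.mul_assoc (diagonal _) (diagonal _), diagonal_mul_diagonal]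
  congr 3
  funext i
  simp [Real.mul_self_sqrt (hM.eigenvalues_nonneg i)]

theorem Matrix.PosDef.isUnit_det_sqrt {ι : Type*} [Fintype ι] [DecidableEq ι]
    {M : Matrix ι ι ℝ} (hM : M.PosDef) : IsUnit hM.posSemidef.sqrt.det := by
  refine isUnit_of_mul_isUnit_left (y := hM.posSemidef.sqrt.det) ?_
  rw [← det_mul, hM.posSemidef.sqrt_mul_sqrt]
  exact hM.det_pos.ne'.isUnit

theorem Matrix.toRows₁_fromBlocks_mul {R ι ι' ρ ρ' κ : Type*} [Semiring R] [Fintype ι]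
    [Fintype ι'] (B₁₁ : Matrix ρ ι R) (B₁₂ : Matrix ρ ι' R) (B₂₁ : Matrix ρ' ι R)
    (B₂₂ : Matrix ρ' ι' R) (Z : Matrix (ι ⊕ ι') κ R) :
    (fromBlocks B₁₁ B₁₂ B₂₁ B₂₂ * Z).toRows₁ = B₁₁ * Z.toRows₁ + B₁₂ * Z.toRows₂ := by
  conv_lhs => rw [← fromRows_toRows Z, fromBlocks_mul_fromRows, toRows₁_fromRows]

theorem Matrix.mul_pow_mul_toRows₁_eq_zero {R ι ι' ρ μ κ : Type*} [CommRing R] [Fintype ι]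
    [DecidableEq ι] [Fintype ι'] [DecidableEq ι'] [Fintype μ] [DecidableEq μ]
    {A : Matrix ι ι R} {B : Matrix ι μ R} {K : Matrix μ ι' R} {A₂₁ : Matrix ι' ι R}
    {A₂₂ : Matrix ι' ι' R} {S : Matrix ρ ι R} {T : Matrix μ μ R} (hT : IsUnit T.det)
    {Y : Matrix (ι ⊕ ι') κ R}
    (hY : ∀ j : ℕ, fromBlocks S 0 0 (T * K) * fromBlocks A (B * K) A₂₁ A₂₂ ^ j * Y = 0)
    (j : ℕ) : S * A ^ j * Y.toRows₁ = 0 := by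
  set Acl := fromBlocks A (B * K) A₂₁ A₂₂
  have hsplit (i : ℕ) : S * (Acl ^ i * Y).toRows₁ = 0 ∧ K * (Acl ^ i * Y).toRows₂ = 0 := by
    have h := hY i
    rw [Matrix.mul_assoc, ← fromRows_toRows (Acl ^ i * Y), fromBlocks_mul_fromRows,
      ← fromRows_zero, fromRows_ext_iff] at h
    simp only [Matrix.zero_mul, add_zero, zero_add] at h
    refine ⟨h.1, ?_⟩
    rw [← nonsing_inv_mul_cancel_left T (K * _) hT, ← Matrix.mul_assoc T, h.2, Matrix.mul_zero]
  have htop (i : ℕ) : (Acl ^ i * Y).toRows₁ = A ^ i * Y.toRows₁ := by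
    induction i with
    | zero => simp
    | succ i ih =>
      rw [pow_succ', Matrix.mul_assoc, toRows₁_fromBlocks_mul, ih, Matrix.mul_assoc B,
        (hsplit i).2, Matrix.mul_zero, add_zero, pow_succ', Matrix.mul_assoc]
  rw [Matrix.mul_assoc, ← htop]
  exact (hsplit j).1

/-- Key structural lemma for informativity: if `C_cl exp(A_cl τ) B̃ = 0` for all `τ ≥ 0`,
then the solution `X̃` of `A_cl X̃ + X̃ A_clᵀ + B̃ B̃ᵀ = 0` has vanishing top-left and
top-right `n×n` blocks. -/
theorem key_structural_lemma_informativity {n m p k : ℕ}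
    (A : Matrix (Fin n) (Fin n) ℝ) (B : Matrix (Fin n) (Fin m) ℝ)
    (C : Matrix (Fin p) (Fin n) ℝ)
    {Q : Matrix (Fin n) (Fin n) ℝ} {R : Matrix (Fin m) (Fin m) ℝ}
    (hQ : Q.PosSemidef) (hR : R.PosDef)
    (hQA : Controllable Aᵀ (hQ.sqrt)ᵀ)
    (AK : Matrix (Fin n) (Fin n) ℝ) (BK : Matrix (Fin n) (Fin p) ℝ)
    (CK : Matrix (Fin m) (Fin n) ℝ)
    (hstab : IsStableMatrix (AclM A B C AK BK CK))
    (Btil : Matrix (Fin n ⊕ Fin n) (Fin k) ℝ)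
    (hBtil : ∀ τ : ℝ, 0 ≤ τ →
      CclM hQ hR CK * NormedSpace.exp (τ • AclM A B C AK BK CK) * Btil = 0)
    (Xtil : Matrix (Fin n ⊕ Fin n) (Fin n ⊕ Fin n) ℝ)
    (hXtil : AclM A B C AK BK CK * Xtil + Xtil * (AclM A B C AK BK CK)ᵀ
        + Btil * Btilᵀ = 0) :
    Xtil.toBlocks₁₁ = 0 ∧ Xtil.toBlocks₁₂ = 0 := by
  have hXtil_unobs : ∀ j : ℕ, CclM hQ hR CK * AclM A B C AK BK CK ^ j * Xtil = 0 :=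
    hstab.mul_pow_mul_eq_zero_of_lyapunov
      (mul_pow_mul_eq_zero_of_mul_exp_smul_mul_eq_zero _ _ _ hBtil) hXtil
  have htop : Xtil.toRows₁ = 0 := hQA.eq_zero_of_forall_mul_pow_mul_eq_zero
    (mul_pow_mul_toRows₁_eq_zero hR.isUnit_det_sqrt hXtil_unobs)
  constructor <;> ext i j <;> exact congrFun (congrFun htop i) _
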